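/- arXiv:2303.15165 — 3 statements merged into one kernel-verified Lean document; each statement's English description precedes it below -/
import Mathlib

section
/- The isotropy group of 0 in the restricted Siegel disc is the unitary group U(H₊): if (g, h) is a restricted symplectic pair, then g is invertible, and the action (g,h)·Z = (gZ + h)(h̄Z + ḡ)^{−1} fixes Z = 0 (equivalently h ḡ^{−1} = 0) if and only if h = 0 and g is unitary (g g* = g* g = I). Conversely, for every unitary g on E the pair (g, 0) is a restricted symplectic pair fixing 0. -/
open Complex ComplexOrder

noncomputable section

/-- The complex Hilbert space `E = ℓ²(ℕ, ℂ)`. -/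
abbrev E : Type := lp (fun _ : ℕ => ℂ) 2

/-- The standard Hilbert basis vector `e_n` of `E`. -/
def stdVec (n : ℕ) : E := lp.single 2 n (1 : ℂ)

/-- The conjugated operator `T̄ = C ∘ T ∘ C`, where `C` is entrywise complex
conjugation on `E` (the `star` operation of `E`). -/
def opBar (T : E →L[ℂ] E) : E →L[ℂ] E :=
  LinearMap.mkContinuous
    { toFun := fun x => star (T (star x))
      map_add' := fun x y => by
        show star (T (star (x + y))) = star (T (star x)) + star (T (star y))
        rw [star_add, map_add, star_add]
      map_smul' := fun c x => by
        simp only [RingHom.id_apply, star_smul, map_smul, star_star] }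
    ‖T‖ (fun x => by
      show ‖star (T (star x))‖ ≤ ‖T‖ * ‖x‖
      rw [norm_star]
      calc ‖T (star x)‖ ≤ ‖T‖ * ‖star x‖ := T.le_opNorm _
        _ = ‖T‖ * ‖x‖ := by rw [norm_star])

/-- The transpose `Tᵀ = (T̄)*`. -/
def opTrans (T : E →L[ℂ] E) : E →L[ℂ] E :=
  ContinuousLinearMap.adjoint (opBar T)

/-- `T` is a Hilbert–Schmidt operator: `Σₙ ‖T eₙ‖² < ∞`. -/
def IsHS (T : E →L[ℂ] E) : Prop :=
  Summable fun n : ℕ => ‖T (stdVec n)‖ ^ 2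

/-- Membership in the restricted Siegel disc: `Zᵀ = Z`, `Z` Hilbert–Schmidt, and
`⟨(I − Z Z̄)u, u⟩ > 0` for all `u ≠ 0`. -/
def MemSiegelRes (Z : E →L[ℂ] E) : Prop :=
  opTrans Z = Z ∧ IsHS Z ∧
  ∀ u : E, u ≠ 0 → 0 < (inner ℂ (((1 : E →L[ℂ] E) - Z * opBar Z) u) u : ℂ)

/-- `(g, h)` is a restricted symplectic pair: `h` is Hilbert–Schmidt and the block
operator `(g h; h̄ ḡ)` is symplectic, i.e. `g g* − h h* = I`, `g hᵀ = h gᵀ`,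
`g* g − hᵀ h̄ = I`, `g* h = hᵀ ḡ`. -/
def IsRSPair (g h : E →L[ℂ] E) : Prop :=
  IsHS h ∧
  g * ContinuousLinearMap.adjoint g - h * ContinuousLinearMap.adjoint h = 1 ∧
  g * opTrans h = h * opTrans g ∧
  ContinuousLinearMap.adjoint g * g - opTrans h * opBar h = 1 ∧
  ContinuousLinearMap.adjoint g * h = opTrans h * opBar g

end

/-!
For a restricted symplectic pair, `g g* = 1 + h h*` and `g* g = 1 + hᵀ h̄ = 1 + hᵀ (hᵀ)*`. Both
are `1` plus a positive element of the C⋆-algebra of bounded operators, hence invertible, so `g`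
has a right and a left inverse and is invertible. For `h = 0` the same identities say that `g` is
unitary, and conversely, for `h = 0` all defining identities of a restricted symplectic pair
reduce to unitarity of `g`.
-/

open ContinuousLinearMap

theorem isUnit_of_mul_isUnit_left_of_mul_isUnit_right {M : Type*} [Monoid M] {a b c : M}
    (hab : IsUnit (a * b)) (hca : IsUnit (c * a)) : IsUnit a := by
  obtain ⟨u, hu⟩ := hab
  obtain ⟨w, hw⟩ := hca
  have hright : a * (b * ↑u⁻¹) = 1 := by rw [← mul_assoc, ← hu, Units.mul_inv]
  have hleft : (↑w⁻¹ * c) * a = 1 := by rw [mul_assoc, ← hw, Units.inv_mul]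
  refine isUnit_iff_exists.mpr ⟨b * ↑u⁻¹, hright, ?_⟩
  rwa [← left_inv_eq_right_inv hleft hright]

theorem isUnit_one_add_mul_star {A : Type*} [CStarAlgebra A] [PartialOrder A]
    [StarOrderedRing A] (a : A) : IsUnit (1 + a * star a) :=
  (isStrictlyPositive_one.add_nonneg (mul_star_self_nonneg a)).isUnit

@[simp]
theorem opBar_zero : opBar 0 = 0 := by
  ext x : 1
  exact star_zero _

@[simp]
theorem opTrans_zero : opTrans 0 = 0 := by
  simp [opTrans]

theorem adjoint_opTrans (T : E →L[ℂ] E) : adjoint (opTrans T) = opBar T :=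
  adjoint_adjoint (opBar T)

theorem IsRSPair.isUnit_left {g h : E →L[ℂ] E} (hgh : IsRSPair g h) : IsUnit g := by
  obtain ⟨-, hggstar, -, hgstarg, -⟩ := hgh
  rw [sub_eq_iff_eq_add] at hggstar hgstarg
  refine isUnit_of_mul_isUnit_left_of_mul_isUnit_right (b := star g) (c := star g) ?_ ?_
  · simpa only [star_eq_adjoint, hggstar] using isUnit_one_add_mul_star h
  · simpa only [star_eq_adjoint, hgstarg, adjoint_opTrans] using
      isUnit_one_add_mul_star (opTrans h)

theorem isRSPair_zero_right_iff {g : E →L[ℂ] E} :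
    IsRSPair g 0 ↔ g * adjoint g = 1 ∧ adjoint g * g = 1 := by
  simp [IsRSPair, IsHS]

/-- **The isotropy group of `0` in the restricted Siegel disc is the unitary group
`U(H₊)`.**  If `(g, h)` is a restricted symplectic pair then `g` is invertible, and the
action `(g,h)·Z = (gZ + h)(h̄Z + ḡ)⁻¹` fixes `0` (i.e. `h = 0`) iff `h = 0` and `g` is
unitary.  Conversely `(g, 0)` is a restricted symplectic pair for every unitary `g`. -/
theorem isotropy_of_zero_is_unitary :
    (∀ g h : E →L[ℂ] E, IsRSPair g h →
      (∃ gi : E →L[ℂ] E, g * gi = 1 ∧ gi * g = 1) ∧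
      (h = 0 → g * ContinuousLinearMap.adjoint g = 1 ∧
        ContinuousLinearMap.adjoint g * g = 1)) ∧
    (∀ g : E →L[ℂ] E, g * ContinuousLinearMap.adjoint g = 1 →
      ContinuousLinearMap.adjoint g * g = 1 → IsRSPair g 0) :=
  ⟨fun _ _ hgh => ⟨isUnit_iff_exists.mp hgh.isUnit_left,
      fun hzero => isRSPair_zero_right_iff.mp (hzero ▸ hgh)⟩,
    fun _ hggstar hgstarg => isRSPair_zero_right_iff.mpr ⟨hggstar, hgstarg⟩⟩
end

section
/- The restricted symplectic pairs are closed under the block-matrix product: if (g₁, h₁) and (g₂, h₂) are restricted symplectic pairs, then the pair (g, h) := (g₁ g₂ + h₁ h̄₂, g₁ h₂ + h₁ ḡ₂) is again a restricted symplectic pair; in particular g₁ h₂ + h₁ ḡ₂ is Hilbert–Schmidt and the relations g g* − h h* = I, g hᵀ = h gᵀ, g* g − hᵀ h̄ = I, g* h = hᵀ ḡ hold for (g, h). (This is the product of the block operators (g₁ h₁; h̄₁ ḡ₁) and (g₂ h₂; h̄₂ ḡ₂), so the restricted symplectic group is a group.) -/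
open Complex ComplexOrder

/-!
Write `J = diag(1, -1)` and `M(g, h) = (g h; h̄ ḡ)`. The four relations of a restricted
symplectic pair say exactly that `M J M* = J` and `M* J M = J`: the remaining entries of these
block identities are adjoints or conjugates of the stated ones, as `T ↦ T̄` commutes with
adjoints. Both identities are preserved under products, and
`M(g₁, h₁) M(g₂, h₂) = M(g₁ g₂ + h₁ h̄₂, g₁ h₂ + h₁ ḡ₂)` because `T ↦ T̄` is an involutive ring
automorphism. This is pure algebra in any star ring with such an automorphism. The
Hilbert–Schmidt condition survives since Hilbert–Schmidt operators form a two-sided ideal.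
-/

section SymplecticPair

theorem Matrix.star_fin_two {α : Type*} [Star α] (a b c d : α) :
    star !![a, b; c, d] = !![star a, star c; star b, star d] := by
  ext i j
  fin_cases i <;> fin_cases j <;> rfl

variable {R : Type*} [Ring R] (σ : R →+* R)

def blockOp (g h : R) : Matrix (Fin 2) (Fin 2) R := !![g, h; σ h, σ g]

def indefiniteForm : Matrix (Fin 2) (Fin 2) R := !![1, 0; 0, -1]

theorem blockOp_mul_blockOp (hσ : Function.Involutive σ) (g₁ h₁ g₂ h₂ : R) :
    blockOp σ g₁ h₁ * blockOp σ g₂ h₂ =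
      blockOp σ (g₁ * g₂ + h₁ * σ h₂) (g₁ * h₂ + h₁ * σ g₂) := by
  simp only [blockOp, Matrix.mul_fin_two, map_add, map_mul, hσ _]
  rw [add_comm (σ h₁ * g₂), add_comm (σ h₁ * h₂)]

variable [StarRing R]

def IsSymplecticPair (g h : R) : Prop :=
  g * star g - h * star h = 1 ∧ g * star (σ h) = h * star (σ g) ∧
  star g * g - star (σ h) * σ h = 1 ∧ star g * h = star (σ h) * σ g

theorem fin_two_eq_indefiniteForm_iff (a b : R) :
    !![a, b; star b, -σ a] = indefiniteForm ↔ a = 1 ∧ b = 0 := by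
  rw [indefiniteForm, ← Matrix.ext_iff]
  simp only [Fin.forall_fin_two, Matrix.of_apply, Matrix.cons_val', Matrix.cons_val_zero,
    Matrix.cons_val_one, Matrix.empty_val', Matrix.cons_val_fin_one]
  constructor
  · exact fun h => ⟨h.1.1, h.1.2⟩
  · rintro ⟨rfl, rfl⟩
    simp

variable {σ}

theorem blockOp_mul_indefiniteForm_mul_star (hσ : ∀ x, σ (star x) = star (σ x)) (g h : R) :
    blockOp σ g h * indefiniteForm * star (blockOp σ g h) =
      !![g * star g - h * star h, g * star (σ h) - h * star (σ g);
        star (g * star (σ h) - h * star (σ g)), -σ (g * star g - h * star h)] := by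
  simp only [blockOp, indefiniteForm, Matrix.star_fin_two, Matrix.mul_fin_two, hσ, star_mul,
    star_sub, map_sub, map_mul, star_star]
  congr 3 <;> noncomm_ring

theorem star_blockOp_mul_indefiniteForm_mul (hσ : Function.Involutive σ)
    (hσ_star : ∀ x, σ (star x) = star (σ x)) (g h : R) :
    star (blockOp σ g h) * indefiniteForm * blockOp σ g h =
      !![star g * g - star (σ h) * σ h, star g * h - star (σ h) * σ g;
        star (star g * h - star (σ h) * σ g), -σ (star g * g - star (σ h) * σ h)] := by
  simp only [blockOp, indefiniteForm, Matrix.star_fin_two, Matrix.mul_fin_two, hσ_star, hσ _,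
    star_mul, star_sub, map_sub, map_mul, star_star]
  congr 3 <;> noncomm_ring

theorem isSymplecticPair_iff_blockOp (hσ : Function.Involutive σ)
    (hσ_star : ∀ x, σ (star x) = star (σ x)) (g h : R) :
    IsSymplecticPair σ g h ↔
      blockOp σ g h * indefiniteForm * star (blockOp σ g h) = indefiniteForm ∧
        star (blockOp σ g h) * indefiniteForm * blockOp σ g h = indefiniteForm := by
  rw [blockOp_mul_indefiniteForm_mul_star hσ_star, star_blockOp_mul_indefiniteForm_mul hσ hσ_star,
    fin_two_eq_indefiniteForm_iff, fin_two_eq_indefiniteForm_iff, sub_eq_zero, sub_eq_zero]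
  exact and_assoc.symm

theorem IsSymplecticPair.mul (hσ : Function.Involutive σ)
    (hσ_star : ∀ x, σ (star x) = star (σ x)) {g₁ h₁ g₂ h₂ : R}
    (hp₁ : IsSymplecticPair σ g₁ h₁) (hp₂ : IsSymplecticPair σ g₂ h₂) :
    IsSymplecticPair σ (g₁ * g₂ + h₁ * σ h₂) (g₁ * h₂ + h₁ * σ g₂) := by
  rw [isSymplecticPair_iff_blockOp hσ hσ_star] at hp₁ hp₂ ⊢
  obtain ⟨left₁, right₁⟩ := hp₁
  obtain ⟨left₂, right₂⟩ := hp₂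
  rw [← blockOp_mul_blockOp σ hσ, star_mul]
  constructor
  · calc _ = blockOp σ g₁ h₁ * (blockOp σ g₂ h₂ * indefiniteForm * star (blockOp σ g₂ h₂)) *
          star (blockOp σ g₁ h₁) := by noncomm_ring
      _ = indefiniteForm := by rw [left₂, left₁]
  · calc _ = star (blockOp σ g₂ h₂) * (star (blockOp σ g₁ h₁) * indefiniteForm *
          blockOp σ g₁ h₁) * blockOp σ g₂ h₂ := by noncomm_ring
      _ = indefiniteForm := by rw [right₁, right₂]

end SymplecticPair

section Operators

open ContinuousLinearMap

theorem opBar_apply (T : E →L[ℂ] E) (x : E) : opBar T x = star (T (star x)) := rfl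

theorem opBar_opBar (T : E →L[ℂ] E) : opBar (opBar T) = T := by
  ext x
  simp [opBar_apply]

noncomputable def opBarRingHom : (E →L[ℂ] E) →+* (E →L[ℂ] E) where
  toFun := opBar
  map_one' := by ext x; simp [opBar_apply]
  map_mul' S T := by ext x; simp [opBar_apply]
  map_zero' := by ext x; simp [opBar_apply]
  map_add' S T := by ext x; simp [opBar_apply]

theorem lp.inner_star_star {ι : Type*} (x y : lp (fun _ : ι => ℂ) 2) :
    inner ℂ (star x) (star y) = star (inner ℂ x y) := by
  rw [lp.inner_eq_tsum, lp.inner_eq_tsum, tsum_star]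
  refine tsum_congr fun i => ?_
  simp only [lp.coeFn_star, Pi.star_apply, RCLike.inner_apply, starRingEnd_apply, star_mul']

theorem opBar_star (T : E →L[ℂ] E) : opBar (star T) = star (opBar T) := by
  rw [star_eq_adjoint, star_eq_adjoint, eq_adjoint_iff]
  intro x y
  calc inner ℂ (star (adjoint T (star x))) y
      = inner ℂ (star (adjoint T (star x))) (star (star y)) := by rw [star_star]
    _ = star (inner ℂ (star x) (T (star y))) := by rw [lp.inner_star_star, adjoint_inner_left]
    _ = inner ℂ x (star (T (star y))) := by rw [← lp.inner_star_star, star_star]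

theorem isRSPair_iff (g h : E →L[ℂ] E) :
    IsRSPair g h ↔ IsHS h ∧ IsSymplecticPair opBarRingHom g h :=
  -- `adjoint` is `star`, and `opTrans T` unfolds to `star (opBar T)`.
  Iff.rfl

end Operators

section HilbertSchmidt

theorem lp.norm_sq_eq_tsum {ι : Type*} {G : ι → Type*} [∀ i, NormedAddCommGroup (G i)]
    (x : lp G 2) : ‖x‖ ^ 2 = ∑' i, ‖x i‖ ^ 2 := by
  exact_mod_cast lp.norm_rpow_eq_tsum (p := 2) (by norm_num) x

theorem lp.summable_norm_sq {ι : Type*} {G : ι → Type*} [∀ i, NormedAddCommGroup (G i)]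
    (x : lp G 2) : Summable fun i => ‖x i‖ ^ 2 := by
  exact_mod_cast (lp.memℓp x).summable (p := 2) (by norm_num)

theorem apply_eq_inner_stdVec (x : E) (n : ℕ) : x n = inner ℂ (stdVec n) x := by
  rw [stdVec, lp.inner_single_left, RCLike.inner_apply, map_one, mul_one]

theorem norm_star_apply_stdVec_apply (T : E →L[ℂ] E) (m n : ℕ) :
    ‖star T (stdVec m) n‖ = ‖T (stdVec n) m‖ := by
  rw [apply_eq_inner_stdVec, ContinuousLinearMap.star_eq_adjoint,
    ContinuousLinearMap.adjoint_inner_right, apply_eq_inner_stdVec, ← inner_conj_symm,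
    RCLike.norm_conj]

theorem isHS_iff_summable_norm_sq_entries (T : E →L[ℂ] E) :
    IsHS T ↔ Summable fun p : ℕ × ℕ => ‖T (stdVec p.1) p.2‖ ^ 2 := by
  rw [summable_prod_of_nonneg fun p => sq_nonneg _, IsHS]
  simp only [lp.summable_norm_sq, implies_true, true_and, lp.norm_sq_eq_tsum]

theorem isHS_star {T : E →L[ℂ] E} (hT : IsHS T) : IsHS (star T) := by
  rw [isHS_iff_summable_norm_sq_entries] at hT ⊢
  simpa only [norm_star_apply_stdVec_apply, Prod.fst_swap, Prod.snd_swap] using hT.prod_symm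

theorem isHS_mul_left (A : E →L[ℂ] E) {T : E →L[ℂ] E} (hT : IsHS T) : IsHS (A * T) :=
  .of_nonneg_of_le (fun _ => sq_nonneg _)
    (fun n => by
      rw [← mul_pow]
      exact pow_le_pow_left₀ (norm_nonneg _) (A.le_opNorm _) 2)
    (Summable.mul_left (‖A‖ ^ 2) hT)

theorem isHS_mul_right {T : E →L[ℂ] E} (hT : IsHS T) (A : E →L[ℂ] E) : IsHS (T * A) := by
  simpa only [star_mul, star_star] using isHS_star (isHS_mul_left (star A) (isHS_star hT))

theorem isHS_add {S T : E →L[ℂ] E} (hS : IsHS S) (hT : IsHS T) : IsHS (S + T) :=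
  .of_nonneg_of_le (fun _ => sq_nonneg _)
    (fun _ => (pow_le_pow_left₀ (norm_nonneg _) (norm_add_le _ _) 2).trans add_sq_le)
    (Summable.mul_left 2 (Summable.add hS hT))

end HilbertSchmidt

/-- **Restricted symplectic pairs are closed under the block-matrix product.**
If `(g₁, h₁)` and `(g₂, h₂)` are restricted symplectic pairs then so is
`(g₁ g₂ + h₁ h̄₂, g₁ h₂ + h₁ ḡ₂)`; in particular `g₁ h₂ + h₁ ḡ₂` is Hilbert–Schmidt.
(This is the product of the block operators, so `Sp_res` is a group.) -/
theorem restricted_symplectic_group_closed_under_product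
    (g₁ h₁ g₂ h₂ : E →L[ℂ] E) (h1 : IsRSPair g₁ h₁) (h2 : IsRSPair g₂ h₂) :
    IsRSPair (g₁ * g₂ + h₁ * opBar h₂) (g₁ * h₂ + h₁ * opBar g₂) := by
  rw [isRSPair_iff] at h1 h2 ⊢
  obtain ⟨hs₁, hsp₁⟩ := h1
  obtain ⟨hs₂, hsp₂⟩ := h2
  exact ⟨isHS_add (isHS_mul_left g₁ hs₂) (isHS_mul_right hs₁ (opBar g₂)),
    hsp₁.mul (σ := opBarRingHom) opBar_opBar opBar_star hsp₂⟩
end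

section
/- Square-integrable harmonic Beltrami differentials on the disc are bounded (Ω₂(𝔻) ⊆ Ω_∞(𝔻)): there is a constant c > 0 such that for every holomorphic function φ on the open unit disc 𝔻, if the harmonic Beltrami differential μ(z) = (1 − |z|²)² conj(φ(z)) satisfies ‖μ‖₂² := ∫∫_𝔻 |μ(z)|² ρ(z) d²z < ∞, where ρ(z) d²z = 4(1 − |z|²)^{−2} d²z is the hyperbolic area element, then sup_{z∈𝔻} |μ(z)| = sup_{z∈𝔻} (1 − |z|²)² |φ(z)| ≤ c ‖μ‖₂. -/
/-!
Write `μ = (1 - |z|²)² conj φ`. Integrating the circle mean value property in polar coordinates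
gives the area mean value property `∫_{B(z,r)} f = π r² f(z)` for holomorphic `f`; applied to
`f = φ²` it yields `π r² |φ(z)|² ≤ ∫_{B(z,r)} |φ|²`. For `r = (1 - |z|)/2` the disc `B(z,r)` stays
in `𝔻`, the weight satisfies `(1 - |w|²)² ≥ r²` on it, and `(1 - |z|²)² ≤ 16 r²`; together
`π |μ(z)|² ≤ 64 ‖μ‖₂²`.
-/

open Complex Metric MeasureTheory Set Real

section
variable {E : Type*} [NormedAddCommGroup E] [NormedSpace ℝ E]

theorem integral_Ioo_circleMap_eq_circleAverage (f : ℂ → E) (c : ℂ) (s : ℝ) :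
    ∫ θ in Ioo (-π) π, f (circleMap c s θ) = (2 * π) • circleAverage f c s := by
  rw [circleAverage_eq_integral_add (-π), smul_inv_smul₀ (by positivity),
    intervalIntegral.integral_comp_add_right (fun θ ↦ f (circleMap c s θ)),
    intervalIntegral.integral_of_le (by linarith [pi_pos]), integral_Ioc_eq_integral_Ioo]
  ring_nf

theorem circleMap_eq_add_polarCoord_symm (c : ℂ) (p : ℝ × ℝ) :
    circleMap c p.1 p.2 = c + Complex.polarCoord.symm p := by
  simp only [circleMap, Complex.polarCoord_symm_apply, exp_mul_I]
  push_cast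
  ring

theorem integral_ball_eq_setIntegral_polar (f : ℂ → E) (c : ℂ) (r : ℝ) :
    ∫ z in ball c r, f z = ∫ p in Ioo 0 r ×ˢ Ioo (-π) π, p.1 • f (circleMap c p.1 p.2) := by
  have h_ball_iff : ∀ p ∈ polarCoord.target,
      c + Complex.polarCoord.symm p ∈ ball c r ↔ p ∈ Iio r ×ˢ univ := by
    rintro ⟨s, θ⟩ ⟨hs, -⟩
    simp [dist_eq_norm, abs_of_pos (mem_Ioi.1 hs)]
  have h_target : polarCoord.target ∩ Iio r ×ˢ univ = Ioo 0 r ×ˢ Ioo (-π) π := by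
    rw [polarCoord_target, prod_inter_prod, Ioi_inter_Iio, inter_univ]
  calc ∫ z in ball c r, f z
      = ∫ z, (ball c r).indicator f (c + z) := by
        rw [integral_add_left_eq_self, integral_indicator measurableSet_ball]
    _ = ∫ p in polarCoord.target, p.1 • (ball c r).indicator f (c + Complex.polarCoord.symm p) :=
        (Complex.integral_comp_polarCoord_symm _).symm
    _ = ∫ p in polarCoord.target, (Iio r ×ˢ univ).indicator
          (fun p : ℝ × ℝ ↦ p.1 • f (circleMap c p.1 p.2)) p := by
        refine setIntegral_congr_fun polarCoord.open_target.measurableSet fun p hp ↦ ?_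
        simp only [indicator, h_ball_iff p hp, circleMap_eq_add_polarCoord_symm]
        split_ifs <;> simp
    _ = _ := by
        rw [setIntegral_indicator (measurableSet_Iio.prod MeasurableSet.univ), h_target]

theorem ContinuousOn.integrableOn_Ioo_prod_circleMap {f : ℂ → E} {c : ℂ} {r : ℝ}
    (hf : ContinuousOn f (closedBall c r)) :
    IntegrableOn (fun p : ℝ × ℝ ↦ p.1 • f (circleMap c p.1 p.2)) (Ioo 0 r ×ˢ Ioo (-π) π) := by
  have h_maps : MapsTo (fun p : ℝ × ℝ ↦ circleMap c p.1 p.2) (Icc 0 r ×ˢ Icc (-π) π)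
      (closedBall c r) := fun p hp ↦
    closedBall_subset_closedBall hp.1.2 (circleMap_mem_closedBall c hp.1.1 p.2)
  refine ContinuousOn.integrableOn_compact (isCompact_Icc.prod isCompact_Icc) ?_ |>.mono_set
    (prod_mono Ioo_subset_Icc_self Ioo_subset_Icc_self)
  exact continuousOn_fst.smul (hf.comp (by fun_prop) h_maps)

theorem integral_ball_eq_integral_circleAverage {f : ℂ → E} {c : ℂ} {r : ℝ}
    (hf : ContinuousOn f (closedBall c r)) :
    ∫ z in ball c r, f z = ∫ s in Ioo 0 r, (2 * π * s) • circleAverage f c s := by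
  rw [integral_ball_eq_setIntegral_polar, Measure.volume_eq_prod,
    setIntegral_prod _ (hf.integrableOn_Ioo_prod_circleMap)]
  refine setIntegral_congr_fun measurableSet_Ioo fun s _ ↦ ?_
  rw [integral_smul, integral_Ioo_circleMap_eq_circleAverage, smul_smul, mul_comm s]

end

section
variable {F : Type*} [NormedAddCommGroup F] [NormedSpace ℂ F] [CompleteSpace F]

theorem DiffContOnCl.integral_ball_eq_smul {f : ℂ → F} {c : ℂ} {r : ℝ}
    (hf : DiffContOnCl ℂ f (ball c r)) (hr : 0 < r) :
    ∫ z in ball c r, f z = (π * r ^ 2) • f c := by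
  have h_mean : ∀ s ∈ Ioo 0 r, Real.circleAverage f c s = f c := fun s hs ↦
    (hf.mono (ball_subset_ball ((abs_of_pos hs.1).trans_le hs.2.le))).circleAverage
  have h_area : ∫ s in Ioo 0 r, 2 * π * s = π * r ^ 2 := by
    rw [← integral_Ioc_eq_integral_Ioo, ← intervalIntegral.integral_of_le hr.le,
      intervalIntegral.integral_const_mul, integral_id]
    ring
  rw [integral_ball_eq_integral_circleAverage (closure_ball c hr.ne' ▸ hf.continuousOn),
    setIntegral_congr_fun measurableSet_Ioo fun s hs ↦ by rw [h_mean s hs],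
    integral_smul_const, h_area]

end

theorem DiffContOnCl.pi_mul_sq_mul_norm_sq_le_integral_ball {f : ℂ → ℂ} {c : ℂ} {r : ℝ}
    (hf : DiffContOnCl ℂ f (ball c r)) (hr : 0 < r) :
    π * r ^ 2 * ‖f c‖ ^ 2 ≤ ∫ z in ball c r, ‖f z‖ ^ 2 :=
  -- `f²` is holomorphic too, so no Cauchy–Schwarz is needed
  calc π * r ^ 2 * ‖f c‖ ^ 2 = ‖∫ z in ball c r, f z ^ 2‖ := by
        have hf_sq : DiffContOnCl ℂ (fun z ↦ f z ^ 2) (ball c r) :=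
          ⟨hf.1.pow 2, hf.2.pow 2⟩
        rw [hf_sq.integral_ball_eq_smul hr]
        simp [norm_pow, abs_of_pos pi_pos]
    _ ≤ ∫ z in ball c r, ‖f z ^ 2‖ := norm_integral_le_integral_norm _
    _ = ∫ z in ball c r, ‖f z‖ ^ 2 := by simp_rw [norm_pow]

theorem half_one_sub_norm_le_one_sub_norm_sq {z w : ℂ} (hz : ‖z‖ < 1)
    (hw : w ∈ ball z ((1 - ‖z‖) / 2)) : (1 - ‖z‖) / 2 ≤ 1 - ‖w‖ ^ 2 := by
  have := norm_sub_norm_le w z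
  rw [mem_ball_iff_norm] at hw
  nlinarith [norm_nonneg w]

theorem one_sub_norm_sq_sq_mul_norm_sq_le_integral {φ : ℂ → ℂ}
    (hφ : DifferentiableOn ℂ φ (ball 0 1))
    (hint : IntegrableOn (fun w ↦ (1 - ‖w‖ ^ 2) ^ 2 * ‖φ w‖ ^ 2) (ball 0 1))
    {z : ℂ} (hz : z ∈ ball (0 : ℂ) 1) :
    π * ((1 - ‖z‖ ^ 2) ^ 2 * ‖φ z‖) ^ 2 ≤ 256 * ∫ w in ball 0 1, (1 - ‖w‖ ^ 2) ^ 2 * ‖φ w‖ ^ 2 := by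
  have hz1 : ‖z‖ < 1 := mem_ball_zero_iff.1 hz
  set r := (1 - ‖z‖) / 2 with hr_def
  have hr : 0 < r := by linarith
  have h_sub : closedBall z r ⊆ ball 0 1 := closedBall_subset_ball' (by simp; linarith)
  have hφr : DiffContOnCl ℂ φ (ball z r) := hφ.diffContOnCl_ball h_sub
  have h_center : (1 - ‖z‖ ^ 2) ^ 2 ≤ 16 * r ^ 2 := by
    have h_le : 1 - ‖z‖ ^ 2 ≤ 4 * r := by nlinarith [norm_nonneg z]
    have h_nonneg : 0 ≤ 1 - ‖z‖ ^ 2 := by nlinarith [norm_nonneg z]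
    nlinarith [mul_le_mul h_le h_le h_nonneg (by positivity)]
  have h_int_r : IntegrableOn (fun w ↦ r ^ 2 * ‖φ w‖ ^ 2) (ball z r) :=
    (((hφ.continuousOn.mono h_sub).norm.pow 2).const_smul (r ^ 2) |>.integrableOn_compact
      (isCompact_closedBall z r)).mono_set ball_subset_closedBall
  calc π * ((1 - ‖z‖ ^ 2) ^ 2 * ‖φ z‖) ^ 2
      ≤ π * ((16 * r ^ 2) * ‖φ z‖) ^ 2 := by gcongr
    _ = 256 * r ^ 2 * (π * r ^ 2 * ‖φ z‖ ^ 2) := by ring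
    _ ≤ 256 * r ^ 2 * ∫ w in ball z r, ‖φ w‖ ^ 2 := by
        gcongr; exact hφr.pi_mul_sq_mul_norm_sq_le_integral_ball hr
    _ = 256 * ∫ w in ball z r, r ^ 2 * ‖φ w‖ ^ 2 := by rw [integral_const_mul, mul_assoc]
    _ ≤ 256 * ∫ w in ball z r, (1 - ‖w‖ ^ 2) ^ 2 * ‖φ w‖ ^ 2 := by
        gcongr 256 * ?_
        refine setIntegral_mono_on h_int_r (hint.mono_set (ball_subset_closedBall.trans h_sub))
          measurableSet_ball fun w hw ↦ ?_
        gcongr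
        exact half_one_sub_norm_le_one_sub_norm_sq hz1 hw
    _ ≤ 256 * ∫ w in ball 0 1, (1 - ‖w‖ ^ 2) ^ 2 * ‖φ w‖ ^ 2 := by
        gcongr 256 * ?_
        exact setIntegral_mono_set hint (.of_forall fun w ↦ by positivity)
          (ball_subset_closedBall.trans h_sub).eventuallyLE

/-- **Square-integrable harmonic Beltrami differentials on the disc are bounded**
(`Ω₂(𝔻) ⊆ Ω_∞(𝔻)`): there is a constant `c > 0` such that for every holomorphic `φ` on
the unit disc, if the harmonic Beltrami differential `μ(z) = (1 − |z|²)² conj(φ(z))` has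
finite hyperbolic `L²`-norm `‖μ‖₂² = ∫∫_𝔻 |μ|² · 4(1 − |z|²)⁻² d²z < ∞`, then
`sup_{z∈𝔻} |μ(z)| = sup_{z∈𝔻} (1 − |z|²)² |φ(z)| ≤ c ‖μ‖₂`. -/
theorem l2_harmonic_beltrami_is_bounded :
    ∃ c : ℝ, 0 < c ∧
      ∀ φ : ℂ → ℂ, DifferentiableOn ℂ φ (Metric.ball (0 : ℂ) 1) →
        ∀ μ : ℂ → ℂ,
          (∀ z : ℂ, μ z = ((1 : ℝ) - ‖z‖ ^ 2) ^ 2 * (starRingEnd ℂ) (φ z)) →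
          MeasureTheory.IntegrableOn
            (fun z : ℂ => ‖μ z‖ ^ 2 * (4 / ((1 : ℝ) - ‖z‖ ^ 2) ^ 2))
            (Metric.ball (0 : ℂ) 1) →
          ∀ z ∈ Metric.ball (0 : ℂ) 1,
            ‖μ z‖ ≤ c * Real.sqrt
              (∫ z in Metric.ball (0 : ℂ) 1,
                ‖μ z‖ ^ 2 * (4 / ((1 : ℝ) - ‖z‖ ^ 2) ^ 2)) := by
  refine ⟨8 / √π, by positivity, fun φ hφ μ hμ hint z hz ↦ ?_⟩
  have h_norm : ∀ w, ‖μ w‖ = (1 - ‖w‖ ^ 2) ^ 2 * ‖φ w‖ := fun w ↦ by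
    rw [hμ, norm_mul, RCLike.norm_conj, ← ofReal_pow, ← ofReal_sub, ← ofReal_pow, norm_real,
      norm_of_nonneg (sq_nonneg _)]
  have h_density : EqOn (fun w ↦ ‖μ w‖ ^ 2 * (4 / (1 - ‖w‖ ^ 2) ^ 2))
      (fun w ↦ 4 * ((1 - ‖w‖ ^ 2) ^ 2 * ‖φ w‖ ^ 2)) (ball 0 1) := fun w hw ↦ by
    have : 1 - ‖w‖ ^ 2 ≠ 0 := by nlinarith [mem_ball_zero_iff.1 hw, norm_nonneg w]
    simp only [h_norm]
    field_simp
  have h_int := (hint.congr_fun h_density measurableSet_ball).const_mul 4⁻¹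
  simp only [← mul_assoc, inv_mul_cancel₀ (four_ne_zero' ℝ), one_mul] at h_int
  have h_bound := one_sub_norm_sq_sq_mul_norm_sq_le_integral hφ h_int hz
  rw [← h_norm] at h_bound
  rw [setIntegral_congr_fun measurableSet_ball h_density, integral_const_mul,
    ← pow_le_pow_iff_left₀ (norm_nonneg _) (by positivity) two_ne_zero, mul_pow, div_pow,
    sq_sqrt pi_pos.le, sq_sqrt (by positivity), div_mul_eq_mul_div, le_div_iff₀ pi_pos]
  linarith
end
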